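/- arXiv:1604.01087 — 3 statements merged into one kernel-verified Lean document; each statement's English description precedes it below -/
import Mathlib

section
/- Let π = {V_i}, σ = {W_j}, τ = {X_k} be three direct-sum decompositions of a finite-dimensional vector space V that are pairwise compatible (i.e., for each pair, the nonzero pairwise intersections of their subspaces form a DSD of V). Then the join π ∨ σ = {V_i ∩ W_j : V_i ∩ W_j ≠ 0} is compatible with τ; equivalently, the nonzero triple intersections V_i ∩ W_j ∩ X_k form a direct-sum decomposition of V. -/
/-!
If `Y` and the family of intersections `Y a ⊓ X l` are both direct sum decompositions, then each
`Y a` is the sum of its pieces `Y a ⊓ X l`: in a modular lattice a family below an independent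
family with the same supremum `⊤` must coincide with it. Applied to `π` and to `σ`, a vector of
`V_i ⊓ W_j` is written in two ways as a sum of components in the `X_l`; by independence of `τ` the
two decompositions agree, so each component lies in `V_i ⊓ W_j ⊓ X_l`. Hence the triple
intersections span `V`, and they are independent because they refine the independent family
`π ∨ σ` by pieces of the independent family `τ`.
-/

section ModularLattice

variable {α ι κ : Type*} [CompleteLattice α] [IsModularLattice α]

theorem iSupIndep.prod_of_le {A : ι → α} {B : ι → κ → α} (hA : iSupIndep A)
    (hB : ∀ i, iSupIndep (B i)) (hle : ∀ i k, B i k ≤ A i) :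
    iSupIndep fun p : ι × κ => B p.1 p.2 := by
  rintro ⟨i, k⟩
  have hsplit : ⨆ (q : ι × κ) (_ : q ≠ (i, k)), B q.1 q.2 ≤
      (⨆ (k') (_ : k' ≠ k), B i k') ⊔ ⨆ (i') (_ : i' ≠ i), A i' := by
    refine iSup₂_le fun ⟨i', k'⟩ hq => ?_
    obtain rfl | hi := eq_or_ne i' i
    · exact le_sup_of_le_left (le_iSup₂_of_le k' (fun h => hq (by rw [h])) le_rfl)
    · exact le_sup_of_le_right (le_iSup₂_of_le i' hi (hle i' k'))
  refine Disjoint.mono_right hsplit ((hB i k).disjoint_sup_right_of_disjoint_sup_left ?_)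
  exact (hA i).mono_left (sup_le (hle i k) (iSup₂_le fun k' _ => hle i k'))

theorem iSupIndep.iSup_inf_eq_of_iSup_prod_inf_eq_top {Y : ι → α} {X : κ → α}
    (hY : iSupIndep Y) (h : ⨆ p : ι × κ, Y p.1 ⊓ X p.2 = ⊤) (i : ι) :
    ⨆ k, Y i ⊓ X k = Y i := by
  rw [iSup_prod] at h
  exact congrFun ((hY.le_iff_eq_of_iSup_eq_top h).mp fun i => iSup_le fun _ => inf_le_left) i

end ModularLattice

theorem iSupIndep.iSup_inf_iSup_of_le {R M ι : Type*} [Ring R] [AddCommGroup M] [Module R M]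
    {X a b : ι → Submodule R M} (hX : iSupIndep X) (ha : a ≤ X) (hb : b ≤ X) :
    (⨆ i, a i) ⊓ ⨆ i, b i = ⨆ i, a i ⊓ b i := by
  refine le_antisymm (fun v ⟨hva, hvb⟩ => ?_)
    (le_inf (iSup_mono fun _ => inf_le_left) (iSup_mono fun _ => inf_le_right))
  classical
  obtain ⟨f, hfa, rfl⟩ := (Submodule.mem_iSup_iff_exists_finsupp _ _).mp hva
  obtain ⟨g, hgb, hfg⟩ := (Submodule.mem_iSup_iff_exists_finsupp _ _).mp hvb
  set s := f.support ∪ g.support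
  have hsum : ∑ i ∈ s, f i = ∑ i ∈ s, g i :=
    (f.sum_of_support_subset Finset.subset_union_left (fun _ x => x) fun _ _ => rfl).symm.trans
      (hfg.symm.trans (g.sum_of_support_subset Finset.subset_union_right _ fun _ _ => rfl))
  have heq : f = g := by
    ext i
    by_cases hi : i ∈ s
    · exact (iSupIndep_iff_finsetSum_eq_imp_eq X).mp hX s f g
        (fun i _ => ⟨ha i (hfa i), hb i (hgb i)⟩) hsum i hi
    · simp only [s, Finset.mem_union, Finsupp.mem_support_iff, not_or, not_not] at hi
      rw [hi.1, hi.2]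
  exact (Submodule.mem_iSup_iff_exists_finsupp _ _).mpr
    ⟨f, fun i => ⟨hfa i, heq ▸ hgb i⟩, rfl⟩

theorem stmt1_general {K V : Type*} [Field K] [AddCommGroup V] [Module K V]
    {I J L : Type*} [DecidableEq I] [DecidableEq J] [DecidableEq L]
    (Vf : I → Submodule K V) (Wf : J → Submodule K V) (Xf : L → Submodule K V)
    (hπ : DirectSum.IsInternal Vf) (hσ : DirectSum.IsInternal Wf)
    (hτ : DirectSum.IsInternal Xf)
    (hπσ : DirectSum.IsInternal (fun p : I × J => Vf p.1 ⊓ Wf p.2))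
    (hπτ : DirectSum.IsInternal (fun p : I × L => Vf p.1 ⊓ Xf p.2))
    (hστ : DirectSum.IsInternal (fun p : J × L => Wf p.1 ⊓ Xf p.2)) :
    DirectSum.IsInternal (fun p : I × J × L => Vf p.1 ⊓ Wf p.2.1 ⊓ Xf p.2.2) := by
  have hVX := hπ.submodule_iSupIndep.iSup_inf_eq_of_iSup_prod_inf_eq_top hπτ.submodule_iSup_eq_top
  have hWX := hσ.submodule_iSupIndep.iSup_inf_eq_of_iSup_prod_inf_eq_top hστ.submodule_iSup_eq_top
  refine DirectSum.isInternal_submodule_of_iSupIndep_of_iSup_eq_top ?_ ?_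
  · have hindep := hπσ.submodule_iSupIndep.prod_of_le (B := fun p l => Vf p.1 ⊓ Wf p.2 ⊓ Xf l)
      (fun _ => hτ.submodule_iSupIndep.mono fun _ => inf_le_right) fun _ _ => inf_le_left
    exact hindep.comp (Equiv.prodAssoc I J L).symm.injective
  · rw [eq_top_iff, ← hπσ.submodule_iSup_eq_top, iSup_le_iff]
    rintro ⟨i, j⟩
    calc Vf i ⊓ Wf j = (⨆ l, Vf i ⊓ Xf l) ⊓ ⨆ l, Wf j ⊓ Xf l := by rw [hVX i, hWX j]
      _ = ⨆ l, Vf i ⊓ Xf l ⊓ (Wf j ⊓ Xf l) :=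
        hτ.submodule_iSupIndep.iSup_inf_iSup_of_le (fun _ => inf_le_right) fun _ => inf_le_right
      _ ≤ ⨆ p : I × J × L, Vf p.1 ⊓ Wf p.2.1 ⊓ Xf p.2.2 :=
        iSup_le fun l => le_iSup_of_le (i, j, l) (by rw [inf_inf_inf_comm, inf_idem])

/-- If three DSDs π = {V_i}, σ = {W_j}, τ = {X_k} of a
finite-dimensional vector space are pairwise compatible (the pairwise
intersections form DSDs), then the join π ∨ σ is compatible with τ:
the triple intersections V_i ⊓ W_j ⊓ X_k form a DSD of V. -/
theorem stmt1 {K V : Type*} [Field K] [AddCommGroup V] [Module K V]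
    [FiniteDimensional K V]
    {I J L : Type*} [DecidableEq I] [DecidableEq J] [DecidableEq L]
    (Vf : I → Submodule K V) (Wf : J → Submodule K V) (Xf : L → Submodule K V)
    (hVne : ∀ i, Vf i ≠ ⊥) (hWne : ∀ j, Wf j ≠ ⊥) (hXne : ∀ l, Xf l ≠ ⊥)
    (hπ : DirectSum.IsInternal Vf) (hσ : DirectSum.IsInternal Wf)
    (hτ : DirectSum.IsInternal Xf)
    (hπσ : DirectSum.IsInternal (fun p : I × J => Vf p.1 ⊓ Wf p.2))
    (hπτ : DirectSum.IsInternal (fun p : I × L => Vf p.1 ⊓ Xf p.2))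
    (hστ : DirectSum.IsInternal (fun p : J × L => Wf p.1 ⊓ Xf p.2)) :
    DirectSum.IsInternal (fun p : I × J × L => Vf p.1 ⊓ Wf p.2.1 ⊓ Xf p.2.2) :=
  stmt1_general Vf Wf Xf hπ hσ hτ hπσ hπτ hστ
end

section
/- Let π = {V_i} and σ = {W_j} be DSDs of a finite-dimensional vector space V. If there is a DSD τ with σ ⪯ τ and π ⪯ τ (τ refines both), then π and σ are compatible, and their join π ∨ σ (the nonzero intersections V_i ∩ W_j) is the least upper bound of π and σ in the refinement order: π ∨ σ ⪯ τ. -/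
open DirectSum

/-- Intersection of sums of blocks of an independent family. -/
lemma biSup_inf_biSup_le {R M ι : Type*} [Ring R] [AddCommGroup M] [Module R M]
    [DecidableEq ι] {X : ι → Submodule R M} (hX : iSupIndep X) (S T : Set ι) :
    (⨆ l ∈ S, X l) ⊓ (⨆ l ∈ T, X l) ≤ ⨆ l ∈ S ∩ T, X l := by
  classical
  intro x hx
  obtain ⟨hxS, hxT⟩ := Submodule.mem_inf.mp hx
  rw [Submodule.mem_biSup_iff_exists_dfinsupp] at hxS hxT
  obtain ⟨fS, hfS⟩ := hxS
  obtain ⟨fT, hfT⟩ := hxT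
  have key : fS.filter (· ∈ S) = fT.filter (· ∈ T) :=
    hX.dfinsupp_lsum_injective (hfS.trans hfT.symm)
  rw [Submodule.mem_biSup_iff_exists_dfinsupp (fun l => l ∈ S ∩ T)]
  refine ⟨fS.filter (· ∈ S), ?_⟩
  have hfilter : (fS.filter (· ∈ S)).filter (fun l => l ∈ S ∩ T) = fS.filter (· ∈ S) := by
    ext l
    by_cases hS : l ∈ S <;> by_cases hT : l ∈ T <;>
      simp only [DFinsupp.filter_apply, Set.mem_inter_iff, hS, hT, and_true, and_false,
        if_true, if_false, true_and, false_and]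
    · have := congrFun (congrArg DFunLike.coe key) l
      simp only [DFinsupp.filter_apply, hS, hT, if_true, if_false] at this
      exact_mod_cast this.symm
  rw [hfilter]
  exact hfS

/-- Grouping the blocks of a refining decomposition recovers each block of the
coarser decomposition. -/
lemma block_eq_biSup {R M ι κ : Type*} [Ring R] [AddCommGroup M] [Module R M]
    {X : ι → Submodule R M} {Y : κ → Submodule R M}
    (hXtop : iSup X = ⊤) (hY : iSupIndep Y) (g : ι → κ) (hg : ∀ l, X l ≤ Y (g l)) (k : κ) :
    Y k = ⨆ l ∈ {l | g l = k}, X l := by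
  have htop : (⨆ k', ⨆ l ∈ {l | g l = k'}, X l) = ⊤ := by
    rw [← top_le_iff, ← hXtop]
    exact iSup_le fun l => le_iSup_of_le (g l) (le_biSup _ rfl)
  have hA : ∀ k', (⨆ l ∈ {l | g l = k'}, X l) ≤ Y k' := fun k' =>
    iSup₂_le fun l hl => hl ▸ hg l
  refine le_antisymm ?_ (hA k)
  have hmod : Y k ≤ (⨆ l ∈ {l | g l = k}, X l) ⊔
      (Y k ⊓ ⨆ k' ∈ {k' | k' ≠ k}, ⨆ l ∈ {l | g l = k'}, X l) := by
    rw [inf_comm, ← sup_inf_assoc_of_le _ (hA k)]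
    refine le_inf (le_trans le_top ?_) le_rfl
    rw [← htop]
    exact iSup_le fun k' => by
      by_cases h : k' = k
      · exact h ▸ le_sup_left
      · exact le_sup_of_le_right (le_iSup_of_le k' (le_iSup_of_le h le_rfl))
  have hdisj : Y k ⊓ (⨆ k' ∈ {k' | k' ≠ k}, ⨆ l ∈ {l | g l = k'}, X l) = ⊥ := by
    have : (⨆ k' ∈ {k' | k' ≠ k}, ⨆ l ∈ {l | g l = k'}, X l) ≤ ⨆ k' ∈ {k' | k' ≠ k}, Y k' :=
      iSup₂_mono fun k' _ => hA k'
    refine le_bot_iff.mp (le_trans (inf_le_inf_left _ this) ?_)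
    have := (hY k).eq_bot
    rw [← this]
    exact inf_le_inf_left _ (by
      refine iSup₂_le fun k' hk' => le_iSup_of_le k' (le_iSup_of_le hk' le_rfl))
  calc Y k ≤ _ := hmod
    _ = ⨆ l ∈ {l | g l = k}, X l := by rw [hdisj, sup_bot_eq]

/-- If two DSDs π = {V_i} and σ = {W_j} of a finite-dimensional
vector space have a common upper bound τ = {X_l} in the refinement order
(each block of τ lies in a block of π and in a block of σ), then π and σ are
compatible (their nonzero pairwise intersections form a DSD), and the join
π ∨ σ is below τ, i.e. every block of τ lies in some V_i ⊓ W_j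
(so π ∨ σ is the least upper bound). -/
theorem stmt2 {K V : Type*} [Field K] [AddCommGroup V] [Module K V]
    [FiniteDimensional K V]
    {I J L : Type*} [DecidableEq I] [DecidableEq J] [DecidableEq L]
    (Vf : I → Submodule K V) (Wf : J → Submodule K V) (Xf : L → Submodule K V)
    (hVne : ∀ i, Vf i ≠ ⊥) (hWne : ∀ j, Wf j ≠ ⊥) (hXne : ∀ l, Xf l ≠ ⊥)
    (hπ : DirectSum.IsInternal Vf) (hσ : DirectSum.IsInternal Wf)
    (hτ : DirectSum.IsInternal Xf)
    (hπτ : ∀ l, ∃ i, Xf l ≤ Vf i) (hστ : ∀ l, ∃ j, Xf l ≤ Wf j) :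
    DirectSum.IsInternal (fun p : I × J => Vf p.1 ⊓ Wf p.2) ∧
      ∀ l, ∃ p : I × J, Xf l ≤ Vf p.1 ⊓ Wf p.2 := by
  classical
  choose f1 hf1 using hπτ
  choose f2 hf2 using hστ
  set f : L → I × J := fun l => (f1 l, f2 l) with hf
  have hXtop : iSup Xf = ⊤ := hτ.submodule_iSup_eq_top
  have hXind : iSupIndep Xf := hτ.submodule_iSupIndep
  -- each block of π, σ as a grouped sum of τ-blocks
  have hVeq : ∀ i, Vf i = ⨆ l ∈ {l | f1 l = i}, Xf l :=
    block_eq_biSup hXtop hπ.submodule_iSupIndep f1 hf1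
  have hWeq : ∀ j, Wf j = ⨆ l ∈ {l | f2 l = j}, Xf l :=
    block_eq_biSup hXtop hσ.submodule_iSupIndep f2 hf2
  -- intersections as grouped sums
  have hinter : ∀ p : I × J, Vf p.1 ⊓ Wf p.2 = ⨆ l ∈ {l | f l = p}, Xf l := by
    intro p
    refine le_antisymm ?_ ?_
    · rw [hVeq p.1, hWeq p.2]
      refine le_trans (biSup_inf_biSup_le hXind _ _) ?_
      refine iSup₂_mono' fun l hl => ⟨l, ?_, le_rfl⟩
      simp only [Set.mem_inter_iff, Set.mem_setOf_eq] at hl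
      simp [hf, Prod.ext_iff, hl.1, hl.2]
    · refine iSup₂_le fun l hl => ?_
      have h1 : f1 l = p.1 := congrArg Prod.fst hl
      have h2 : f2 l = p.2 := congrArg Prod.snd hl
      exact le_inf (h1 ▸ hf1 l) (h2 ▸ hf2 l)
  constructor
  · rw [DirectSum.isInternal_submodule_iff_iSupIndep_and_iSup_eq_top]
    constructor
    · -- independence
      intro p
      rw [disjoint_iff]
      show Vf p.1 ⊓ Wf p.2 ⊓ (⨆ q, ⨆ _ : q ≠ p, Vf q.1 ⊓ Wf q.2) = ⊥
      rw [hinter p]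
      have hle : (⨆ q ∈ {q | q ≠ p}, Vf q.1 ⊓ Wf q.2) ≤ ⨆ l ∈ {l | f l ≠ p}, Xf l := by
        refine iSup₂_le fun q hq => ?_
        rw [hinter q]
        refine iSup₂_le fun l hl => le_biSup _ ?_
        show f l ≠ p
        rw [show f l = q from hl]
        exact hq
      have hempty : {l | f l = p} ∩ {l | f l ≠ p} = ∅ := by
        ext l; simp (config := { contextual := true }) [Set.mem_inter_iff]
      refine le_bot_iff.mp ?_
      calc (⨆ l ∈ {l | f l = p}, Xf l) ⊓ (⨆ q, ⨆ _ : q ≠ p, Vf q.1 ⊓ Wf q.2)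
          ≤ (⨆ l ∈ {l | f l = p}, Xf l) ⊓ (⨆ l ∈ {l | f l ≠ p}, Xf l) :=
            inf_le_inf_left _ hle
        _ ≤ ⨆ l ∈ ({l | f l = p} ∩ {l | f l ≠ p}), Xf l := biSup_inf_biSup_le hXind _ _
        _ ≤ ⊥ := by rw [hempty]; simp
    · -- supremum is everything
      rw [← top_le_iff, ← hXtop]
      exact iSup_le fun l => le_iSup_of_le (f l) (le_inf (hf1 l) (hf2 l))
  · exact fun l => ⟨f l, le_inf (hf1 l) (hf2 l)⟩
end

section
/- The meet-semilattice DSD(V) of direct-sum decompositions of a finite-dimensional vector space V (dim V ≥ 2) is atomistic: every DSD is the join of the binary (two-block) DSDs below it in the refinement order. -/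
open Classical

/-- A direct-sum decomposition (DSD) of `V`, presented as a set of nonzero
subspaces whose internal direct sum is `V`. -/
def IsDSD {K V : Type*} [Field K] [AddCommGroup V] [Module K V]
    (C : Set (Submodule K V)) : Prop :=
  (∀ W ∈ C, W ≠ ⊥) ∧ DirectSum.IsInternal (fun W : C => (W : Submodule K V))

/-- `Refines σ π` means every block of `π` is contained in some block of `σ`,
i.e. σ ⪯ π in the refinement order. -/
def Refines {K V : Type*} [Field K] [AddCommGroup V] [Module K V]
    (σ π : Set (Submodule K V)) : Prop :=
  ∀ A ∈ π, ∃ B ∈ σ, A ≤ B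

/-- An atom of DSD(V): a binary (two-block) DSD. -/
def IsBinaryDSD {K V : Type*} [Field K] [AddCommGroup V] [Module K V]
    (α : Set (Submodule K V)) : Prop :=
  IsDSD α ∧ ∃ A B : Submodule K V, A ≠ B ∧ α = {A, B}

lemma key {K V ι : Type*} [Field K] [AddCommGroup V] [Module K V]
    (f : ι → Submodule K V) (hind : iSupIndep f) (htop : ⨆ i, f i = ⊤)
    (x : V) (hx : ∀ i, x ∈ ⨆ j ≠ i, f j) : x = 0 := by
  have hxtop : x ∈ ⨆ i, f i := htop ▸ Submodule.mem_top
  rw [Submodule.mem_iSup_iff_exists_dfinsupp'] at hxtop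
  obtain ⟨w, hw⟩ := hxtop
  have hsum : x = ∑ j ∈ w.support, ((w j : V)) := by
    rw [← hw]; rfl
  have hzero : ∀ i, (w i : V) = 0 := by
    intro i
    have hrest : (∑ j ∈ w.support.erase i, ((w j : V))) ∈ ⨆ j ≠ i, f j := by
      refine Submodule.sum_mem _ fun j hj => ?_
      exact le_biSup f (Finset.ne_of_mem_erase hj) (w j).2
    have hwi : (w i : V) ∈ ⨆ j ≠ i, f j := by
      by_cases hi : i ∈ w.support
      · have hxeq : (w i : V) + ∑ j ∈ w.support.erase i, ((w j : V)) = x := by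
          rw [hsum]; exact Finset.add_sum_erase _ (fun j => ((w j : V))) hi
        have heq : (w i : V) = x - ∑ j ∈ w.support.erase i, ((w j : V)) :=
          eq_sub_of_add_eq hxeq
        rw [heq]
        exact sub_mem (hx i) hrest
      · rw [DFinsupp.notMem_support_iff.mp hi]; simp
    have := (hind i).le_bot (Submodule.mem_inf.mpr ⟨(w i).2, hwi⟩)
    simpa using this
  rw [hsum]
  exact Finset.sum_eq_zero fun j _ => hzero j

/-- DSD(V) is atomistic (dim V ≥ 2): every DSD π is the least
upper bound, in the refinement order, of the binary DSDs below it.  The upper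
bound part is trivial; here is the "least" part: any DSD τ that lies above all
binary DSDs below π lies above π itself. -/
theorem stmt5 {K V : Type*} [Field K] [AddCommGroup V] [Module K V]
    [FiniteDimensional K V] (hdim : 2 ≤ Module.finrank K V)
    (π : Set (Submodule K V)) (hπ : IsDSD π) :
    (∀ α : Set (Submodule K V), IsBinaryDSD α → Refines α π → Refines α π) ∧
    ∀ τ : Set (Submodule K V), IsDSD τ →
      (∀ α : Set (Submodule K V), IsBinaryDSD α → Refines α π → Refines α τ) →
      Refines π τ := by
  refine ⟨fun α _ h => h, fun τ hτ hub => ?_⟩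
  intro A hA
  by_contra hcon
  push_neg at hcon
  obtain ⟨h0π, hπint⟩ := hπ
  set f : π → Submodule K V := fun W => (W : Submodule K V) with hf
  obtain ⟨hind, htop⟩ :=
    (DirectSum.isInternal_submodule_iff_iSupIndep_and_iSup_eq_top f).mp hπint
  -- for each block i, A lies in the complement ⨆ j ≠ i, f j
  have hstep : ∀ i : π, A ≤ ⨆ j ≠ i, f j := by
    intro i
    set co : Submodule K V := ⨆ j ≠ i, f j with hco
    -- iSup over all = f i ⊔ co
    have hsplit : f i ⊔ co = ⊤ := by
      rw [← htop]
      refine le_antisymm (sup_le (le_iSup f i) (iSup_le fun j => iSup_le fun _ => le_iSup f j))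
        (iSup_le fun j => ?_)
      by_cases hji : j = i
      · subst hji; exact le_sup_left
      · exact le_trans (le_biSup f hji) le_sup_right
    by_cases hcobot : co = ⊥
    · -- then f i = ⊤ and A ≤ f i, contradicting hcon
      exfalso
      refine hcon (f i) i.2 ?_
      rw [hcobot, sup_bot_eq] at hsplit
      rw [hsplit]
      exact le_top
    · -- binary DSD {f i, co}
      have hdisj : Disjoint (f i) co := hind i
      have hne : f i ≠ co := by
        intro h
        exact (h0π (f i) i.2) (disjoint_self.mp (h ▸ hdisj))
      set α : Set (Submodule K V) := {f i, co} with hα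
      have hfi_mem : f i ∈ α := Set.mem_insert _ _
      have hco_mem : co ∈ α := Set.mem_insert_of_mem _ rfl
      have hαDSD : IsDSD α := by
        constructor
        · rintro W (rfl | rfl)
          · exact h0π (f i) i.2
          · exact hcobot
        · rw [DirectSum.isInternal_submodule_iff_iSupIndep_and_iSup_eq_top]
          constructor
          · rw [iSupIndep_pair (i := (⟨f i, hfi_mem⟩ : α)) (j := (⟨co, hco_mem⟩ : α))
              (by simpa using hne) (by rintro ⟨k, (rfl | rfl)⟩ <;> simp)]
            exact hdisj
          · rw [← sSup_eq_iSup']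
            rw [hα, sSup_insert, sSup_singleton, hsplit]
      have hαbin : IsBinaryDSD α := ⟨hαDSD, f i, co, hne, rfl⟩
      have hαref : Refines α π := by
        intro C hC
        by_cases hCi : C = f i
        · exact ⟨f i, hfi_mem, le_of_eq hCi⟩
        · refine ⟨co, hco_mem, ?_⟩
          have hne' : (⟨C, hC⟩ : π) ≠ i := by simpa [hf, Subtype.ext_iff] using hCi
          rw [hco]
          exact le_iSup_of_le (⟨C, hC⟩ : π) (le_iSup_of_le hne' le_rfl)
      obtain ⟨B, hB, hAB⟩ := hub α hαbin hαref A hA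
      rcases hB with rfl | rfl
      · exact absurd hAB (hcon _ i.2)
      · exact hAB
  have hA0 : A = ⊥ := by
    rw [eq_bot_iff]
    intro x hx
    have : x = 0 := key f hind htop x fun i => hstep i hx
    simpa using this
  exact hτ.1 A hA hA0
end
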